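/- Neighborhood-hierarchy monotonicity of core-numbers: if v_i ∈ N_i and v_j ∈ N_j with i ≤ j, then c(v_i) ≤ c(v_j), where N_i is the i-th neighborhood hierarchy level obtained by repeatedly removing the set of minimum-neighborhood nodes. -/
import Mathlib


open Finset

variable {α : Type*} [DecidableEq α]

-- Neighbors of `v` within the strongly induced subhypergraph `H[S]`.
open Classical in
noncomputable def nbr (E : Finset (Finset α)) (S : Finset α) (v : α) : Finset α :=
  S.filter (fun u => u ≠ v ∧ ∃ e ∈ E, e ⊆ S ∧ v ∈ e ∧ u ∈ e)

/-- `S` is `k`-cohesive: every node of `S` has at least `k` neighbors in `H[S]`. -/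
def cohesive (E : Finset (Finset α)) (k : ℕ) (S : Finset α) : Prop :=
  ∀ v ∈ S, k ≤ (nbr E S v).card

/-- Neighborhood-based core-number: the largest `k` such that `v` lies in some
`k`-cohesive set (equivalently in the nbr-`k`-core, the greatest such set). -/
noncomputable def coreNum (E : Finset (Finset α)) (v : α) : ℕ :=
  sSup {k | ∃ S : Finset α, cohesive E k S ∧ v ∈ S}

variable [Fintype α]

/-- Nodes remaining after peeling `n` neighborhood-hierarchy levels. -/
noncomputable def remaining (E : Finset (Finset α)) : ℕ → Finset α
  | 0 => Finset.univ
  | n + 1 =>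
    (remaining E n).filter (fun v =>
      ¬ ∀ u ∈ remaining E n, (nbr E (remaining E n) v).card ≤ (nbr E (remaining E n) u).card)

/-- `N_i`: the `i`-th neighborhood hierarchy level (nodes of minimum
neighborhood size in the remaining strongly induced subhypergraph). -/
noncomputable def level (E : Finset (Finset α)) (i : ℕ) : Finset α :=
  remaining E i \ remaining E (i + 1)

lemma nbr_mono (E : Finset (Finset α)) {S T : Finset α} (h : S ⊆ T) (v : α) :
    nbr E S v ⊆ nbr E T v := by
  classical
  intro u hu
  simp only [nbr, mem_filter] at hu ⊢
  obtain ⟨hS, hne, e, he, heS, hv, hue⟩ := hu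
  exact ⟨h hS, hne, e, he, heS.trans h, hv, hue⟩

lemma remaining_anti (E : Finset (Finset α)) {m n : ℕ} (h : m ≤ n) :
    remaining E n ⊆ remaining E m := by
  induction h with
  | refl => exact subset_rfl
  | step _ ih => exact (filter_subset _ _).trans ih

lemma coreNum_bdd (E : Finset (Finset α)) (v : α) :
    BddAbove {k | ∃ S : Finset α, cohesive E k S ∧ v ∈ S} := by
  refine ⟨Fintype.card α, ?_⟩
  rintro k ⟨S, hS, hv⟩
  exact (hS v hv).trans (Finset.card_le_univ _)

/-- Core-numbers are monotone along the neighborhood hierarchy. -/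
theorem hierarchy_core_mono (E : Finset (Finset α)) (i j : ℕ) (hij : i ≤ j)
    (vi vj : α) (hvi : vi ∈ level E i) (hvj : vj ∈ level E j) :
    coreNum E vi ≤ coreNum E vj := by
  classical
  have hne : {k | ∃ S : Finset α, cohesive E k S ∧ vi ∈ S}.Nonempty :=
    ⟨0, {vi}, fun v _ => Nat.zero_le _, mem_singleton_self vi⟩
  refine csSup_le hne ?_
  rintro k ⟨S, hS, hviS⟩
  have hvi2 : vi ∉ remaining E (i + 1) := (mem_sdiff.1 hvi).2
  have hex : ∃ n, ¬ S ⊆ remaining E (n + 1) := ⟨i, fun h => hvi2 (h hviS)⟩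
  have hm1 : ¬ S ⊆ remaining E (Nat.find hex + 1) := Nat.find_spec hex
  have hmle : Nat.find hex ≤ i := Nat.find_le (fun h => hvi2 (h hviS))
  set m := Nat.find hex with hmdef
  have hSm : ∀ n, n ≤ m → S ⊆ remaining E n := by
    intro n hn
    cases n with
    | zero => intro x _; simp [remaining]
    | succ t => exact not_not.1 (Nat.find_min hex (Nat.lt_of_succ_le hn))
  obtain ⟨s, hsS, hs2⟩ := Finset.not_subset.1 hm1
  have hsmem : s ∈ remaining E m := hSm m le_rfl hsS
  have hsmin : ∀ u ∈ remaining E m,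
      (nbr E (remaining E m) s).card ≤ (nbr E (remaining E m) u).card := by
    by_contra h
    apply hs2
    show s ∈ (remaining E m).filter _
    exact mem_filter.2 ⟨hsmem, h⟩
  have hcoh : cohesive E k (remaining E m) := by
    intro u hu
    calc k ≤ (nbr E S s).card := hS s hsS
      _ ≤ (nbr E (remaining E m) s).card :=
          card_le_card (nbr_mono E (hSm m le_rfl) s)
      _ ≤ _ := hsmin u hu
  have hvj' : vj ∈ remaining E m :=
    remaining_anti E (hmle.trans hij) (mem_sdiff.1 hvj).1
  exact le_csSup (coreNum_bdd E vj) ⟨remaining E m, hcoh, hvj'⟩
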